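/- arXiv:1604.05343 — 2 statements merged into one kernel-verified Lean document; each statement's English description precedes it below -/
import Mathlib

section
/- Let v̄ be a tuple of b pairwise distinct complex numbers and let 0 ≤ n ≤ b. Let {v̄_α, v̄_ᾱ} and {v̄_β, v̄_β̄} be two partitions of v̄ into disjoint subsets with |v̄_α| = |v̄_β| = n (so |v̄_ᾱ| = |v̄_β̄| = b−n). Assume all parameters are generic so that every denominator below is nonzero. Then K(v̄_α | v̄_β + c) = (−1)^b · K(v̄_β̄ − c | v̄_ᾱ), where v̄±c denotes the tuple with every element shifted by ±c. -/
open scoped BigOperators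

/-- The rational function `g(x,y) = c/(x-y)`. -/
noncomputable def gG (c x y : ℂ) : ℂ := c / (x - y)

/-- The rational function `f(x,y) = (x-y+c)/(x-y)`. -/
noncomputable def fF (c x y : ℂ) : ℂ := (x - y + c) / (x - y)

/-- The rational function `h(x,y) = (x-y+c)/c`. -/
noncomputable def hH (c x y : ℂ) : ℂ := (x - y + c) / c

/-- A two-argument function applied to tuples denotes the product over all elements. -/
noncomputable def pF (F : ℂ → ℂ → ℂ) (U V : List ℂ) : ℂ :=
  (U.map fun x => (V.map fun y => F x y).prod).prod

/-- The domain-wall partition function `K(ū|v̄) = Δ'(ū)·Δ(v̄)·h(ū,v̄)·det(g(u_j,v_k)/h(u_j,v_k))`,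
written in the equivalent (rational-continuation) form in which the prefactor `h(ū,v̄)` is
distributed over the rows of the determinant:
`K(ū|v̄) = Δ'(ū)·Δ(v̄)·det( g(u_j,v_k)·∏_{k'≠k} h(u_j,v_{k'}) )`.
For tuples of equal length `n` with all denominators nonzero this coincides with the literal
formula, and `K(∅|∅) = 1`. -/
noncomputable def Kd (c : ℂ) (U V : List ℂ) : ℂ :=
  (∏ j : Fin U.length, ∏ k : Fin U.length,
      if (j : ℕ) < (k : ℕ) then gG c (U.get j) (U.get k) else 1) *
  (∏ j : Fin V.length, ∏ k : Fin V.length,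
      if (k : ℕ) < (j : ℕ) then gG c (V.get j) (V.get k) else 1) *
  Matrix.det (Matrix.of fun j k : Fin U.length =>
    gG c (U.get j) (V.getD (k : ℕ) 0) *
      ∏ k' : Fin U.length, if k' = k then 1 else hH c (U.get j) (V.getD (k' : ℕ) 0))

/-- The sub-tuple of a tuple `L` selected by a set `A` of positions (in increasing order). -/
noncomputable def subL (L : List ℂ) (A : Finset (Fin L.length)) : List ℂ :=
  (A.sort (· ≤ ·)).map L.get

/-- Genericity of a family of parameters: all members are pairwise distinct and no difference
of two members equals `±c`, so that every denominator occurring (also after shifts by `±c`)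
is nonzero. -/
def Generic (c : ℂ) (L : List ℂ) : Prop :=
  L.Pairwise fun x y => x ≠ y ∧ x - y ≠ c ∧ x - y ≠ -c

/-!
The determinant formula makes `K(ū|v̄)` invariant under permutations of `ū` and of `v̄`
separately (the Vandermonde-type prefactors and the determinant pick up the same signs) and
under a common shift of both tuples. Moreover `K(x, ū | x + c, v̄) = -K(ū | v̄)`: since
`h(x, x + c) = 0`, the first row of the matrix vanishes off the diagonal, and the remaining
prefactors cancel in pairs because `g(x, u)·h(u, x + c) = g(v, x + c)·h(x, v) = -1`.

Split `v̄` into `P = v̄_{α∩β}`, `Q = v̄_{ᾱ∩β̄}`, `A = v̄_{α∖β}`, `B = v̄_{β∖α}`. Peeling off `P` on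
the left and `Q` on the right reduces both sides to `K(A | B + c) = K(A - c | B)`, with signs
`(-1)^|P|` and `(-1)^|Q|`; since `|A| = |B|`, together they give `(-1)^b`.
-/

open Finset Matrix Equiv

noncomputable def dwMatrix (c : ℂ) {m : ℕ} (u v : Fin m → ℂ) : Matrix (Fin m) (Fin m) ℂ :=
  Matrix.of fun j k => gG c (u j) (v k) * ∏ k', if k' = k then 1 else hH c (u j) (v k')

noncomputable def dwpf (c : ℂ) {m : ℕ} (u v : Fin m → ℂ) : ℂ :=
  (∏ j, ∏ k ∈ Ioi j, gG c (u j) (u k)) * (∏ j, ∏ k ∈ Ioi j, gG c (v k) (v j)) *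
    (dwMatrix c u v).det

lemma gG_neg_neg (c x y : ℂ) : gG c (-x) (-y) = gG c y x := by
  rw [gG, gG, neg_sub_neg]

lemma gG_add_add (c t x y : ℂ) : gG c (x + t) (y + t) = gG c x y := by
  rw [gG, gG, add_sub_add_right_eq_sub]

lemma hH_add_add (c t x y : ℂ) : hH c (x + t) (y + t) = hH c x y := by
  rw [hH, hH, add_sub_add_right_eq_sub]

lemma gG_self_add (c x : ℂ) (hc : c ≠ 0) : gG c x (x + c) = -1 := by
  rw [gG, sub_add_cancel_left, div_neg, div_self hc]

lemma gG_mul_hH_add {c a b : ℂ} (hc : c ≠ 0) (hab : a ≠ b) :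
    gG c a b * hH c b (a + c) = -1 := by
  have : a - b ≠ 0 := sub_ne_zero.mpr hab
  rw [gG, hH]
  field_simp
  ring

lemma gG_add_mul_hH {c a b : ℂ} (hc : c ≠ 0) (hab : a ≠ b + c) :
    gG c a (b + c) * hH c b a = -1 := by
  have : a - (b + c) ≠ 0 := sub_ne_zero.mpr hab
  rw [gG, hH]
  field_simp
  ring

lemma prod_Ioi_sub_comp_perm {R : Type*} [CommRing R] {m : ℕ} (u : Fin m → R)
    (σ : Perm (Fin m)) :
    ∏ j, ∏ k ∈ Ioi j, (u (σ k) - u (σ j)) =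
      Perm.sign σ * ∏ j, ∏ k ∈ Ioi j, (u k - u j) := by
  rw [← det_vandermonde, ← det_vandermonde, ← det_permute]
  rfl

lemma prod_ite_lt_eq_prod_Ioi {M : Type*} [CommMonoid M] {m : ℕ} (f : Fin m → Fin m → M) :
    (∏ j : Fin m, ∏ k : Fin m, if (j : ℕ) < k then f j k else 1) =
      ∏ j, ∏ k ∈ Ioi j, f j k := by
  simp only [← prod_filter, ← Fin.lt_def, filter_lt_eq_Ioi]

lemma prod_Ioi_cons {α M : Type*} [CommMonoid M] {m : ℕ} (f : α → α → M) (x : α)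
    (u : Fin m → α) :
    ∏ j, ∏ k ∈ Ioi j,
        f ((Fin.cons x u : Fin (m + 1) → α) j) ((Fin.cons x u : Fin (m + 1) → α) k) =
      (∏ k, f x (u k)) * ∏ j, ∏ k ∈ Ioi j, f (u j) (u k) := by
  simp [Fin.prod_univ_succ, Fin.prod_Ioi_succ]

lemma det_succ_of_row_zero_succ_eq_zero {R : Type*} [CommRing R] {m : ℕ}
    (A : Matrix (Fin (m + 1)) (Fin (m + 1)) R) (h : ∀ k : Fin m, A 0 k.succ = 0) :
    A.det = A 0 0 * (A.submatrix Fin.succ Fin.succ).det := by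
  simp [det_succ_row_zero A, Fin.sum_univ_succ, h]

lemma exists_equiv_comp_eq_of_range_eq {ι ι' α : Type*} {u : ι → α} {u' : ι' → α}
    (hu : Function.Injective u) (hu' : Function.Injective u') (h : Set.range u = Set.range u') :
    ∃ e : ι' ≃ ι, u ∘ e = u' :=
  ⟨(Equiv.ofInjective u' hu').trans ((Equiv.setCongr h.symm).trans (Equiv.ofInjective u hu).symm),
    funext fun i => by simp [Equiv.apply_ofInjective_symm]⟩

lemma List.exists_eq_ofFn_of_length_eq {α : Type*} {U V : List α} (h : U.length = V.length) :
    ∃ (m : ℕ) (u v : Fin m → α), U = List.ofFn u ∧ V = List.ofFn v :=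
  ⟨U.length, U.get, fun k => V.get (k.cast h), (List.ofFn_get U).symm,
    by rw [← List.ofFn_congr h.symm, List.ofFn_get]⟩

lemma prod_Ioi_gG_comp_perm (c : ℂ) {m : ℕ} (u : Fin m → ℂ) (σ : Perm (Fin m)) :
    ∏ j, ∏ k ∈ Ioi j, gG c (u (σ j)) (u (σ k)) =
      Perm.sign σ * ∏ j, ∏ k ∈ Ioi j, gG c (u j) (u k) := by
  have h := prod_Ioi_sub_comp_perm (-u) σ
  simp only [Pi.neg_apply, neg_sub_neg] at h
  simp only [gG, div_eq_mul_inv, prod_mul_distrib, prod_inv_distrib, h, mul_inv]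
  rcases Int.units_eq_one_or (Perm.sign σ) with hσ | hσ <;> simp [hσ]

lemma dwpf_comp_perm (c : ℂ) {m : ℕ} (u v : Fin m → ℂ) (σ τ : Perm (Fin m)) :
    dwpf c (u ∘ σ) (v ∘ τ) = dwpf c u v := by
  have hv : ∀ w : Fin m → ℂ, ∏ j, ∏ k ∈ Ioi j, gG c (w k) (w j) =
      ∏ j, ∏ k ∈ Ioi j, gG c (-w j) (-w k) := by
    simp only [gG_neg_neg, implies_true]
  have hdet :
      dwMatrix c (u ∘ σ) (v ∘ τ) = ((dwMatrix c u v).submatrix σ id).submatrix id τ := by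
    ext j k
    simp only [dwMatrix, submatrix_apply, of_apply, Function.comp_apply, id_eq]
    congr 1
    exact Fintype.prod_equiv τ _ _ fun k' => by simp only [τ.apply_eq_iff_eq]
  have hsign : ∀ ρ : Perm (Fin m), ((Perm.sign ρ : ℤ) : ℂ) ^ 2 = 1 := by
    intro ρ
    rw [← Int.cast_pow, ← Units.val_pow_eq_pow_val, Int.units_sq, Units.val_one, Int.cast_one]
  unfold dwpf
  rw [hv, hv v, hdet, det_permute', det_permute]
  simp only [Function.comp_apply, prod_Ioi_gG_comp_perm c u σ,
    prod_Ioi_gG_comp_perm c (fun j => -v j) τ]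
  ring_nf
  simp only [hsign, one_mul, mul_one]

lemma dwpf_comp_equiv (c : ℂ) {m m' : ℕ} (u v : Fin m → ℂ) (e e' : Fin m' ≃ Fin m) :
    dwpf c (u ∘ e) (v ∘ e') = dwpf c u v := by
  obtain rfl : m' = m := by simpa using Fintype.card_congr e
  exact dwpf_comp_perm c u v e e'

lemma dwpf_add_const (c t : ℂ) {m : ℕ} (u v : Fin m → ℂ) :
    dwpf c (fun j => u j + t) (fun k => v k + t) = dwpf c u v := by
  simp only [dwpf, dwMatrix, gG_add_add, hH_add_add]

lemma dwMatrix_cons_zero_succ (c x : ℂ) {m : ℕ} (u v : Fin m → ℂ) (k : Fin m) :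
    dwMatrix c (Fin.cons x u) (Fin.cons (x + c) v) 0 k.succ = 0 := by
  refine mul_eq_zero_of_right _ (prod_eq_zero (mem_univ 0) ?_)
  simp [(Fin.succ_ne_zero k).symm, hH]

lemma dwMatrix_cons_zero_zero (c x : ℂ) {m : ℕ} (u v : Fin m → ℂ) :
    dwMatrix c (Fin.cons x u) (Fin.cons (x + c) v) 0 0 =
      gG c x (x + c) * ∏ k, hH c x (v k) := by
  simp [dwMatrix, Fin.prod_univ_succ, Fin.succ_ne_zero]

lemma dwMatrix_cons_submatrix_succ (c x w : ℂ) {m : ℕ} (u v : Fin m → ℂ) :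
    (dwMatrix c (Fin.cons x u) (Fin.cons w v)).submatrix Fin.succ Fin.succ =
      Matrix.of fun j k => hH c (u j) w * dwMatrix c u v j k := by
  ext j k
  simp [dwMatrix, Fin.prod_univ_succ, (Fin.succ_ne_zero k).symm]
  ring

lemma dwpf_cons {c : ℂ} (hc : c ≠ 0) (x : ℂ) {m : ℕ} (u v : Fin m → ℂ)
    (hu : ∀ j, u j ≠ x) (hv : ∀ k, v k ≠ x + c) :
    dwpf c (Fin.cons x u) (Fin.cons (x + c) v) = - dwpf c u v := by
  have hsu : (∏ k, gG c x (u k)) * ∏ j, hH c (u j) (x + c) = (-1) ^ m := by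
    simp [← prod_mul_distrib, gG_mul_hH_add hc (hu _).symm]
  have hsv : (∏ k, gG c (v k) (x + c)) * ∏ k, hH c x (v k) = (-1) ^ m := by
    simp [← prod_mul_distrib, gG_add_mul_hH hc (hv _)]
  have hs : ((∏ k, gG c x (u k)) * ∏ j, hH c (u j) (x + c)) *
      ((∏ k, gG c (v k) (x + c)) * ∏ k, hH c x (v k)) = 1 := by
    rw [hsu, hsv, ← mul_pow, neg_one_mul, neg_neg, one_pow]
  unfold dwpf
  rw [prod_Ioi_cons (gG c), prod_Ioi_cons (fun a b => gG c b a),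
    det_succ_of_row_zero_succ_eq_zero _ (dwMatrix_cons_zero_succ c x u v),
    dwMatrix_cons_zero_zero, dwMatrix_cons_submatrix_succ, det_mul_column, gG_self_add c x hc]
  linear_combination -(∏ j, ∏ k ∈ Ioi j, gG c (u j) (u k)) *
    (∏ j, ∏ k ∈ Ioi j, gG c (v k) (v j)) * (dwMatrix c u v).det * hs

lemma prod_ite_lt_ofFn {M : Type*} [CommMonoid M] {m : ℕ} (f : ℂ → ℂ → M)
    (u : Fin m → ℂ) :
    (∏ j : Fin (List.ofFn u).length, ∏ k : Fin (List.ofFn u).length,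
      if (j : ℕ) < k then f ((List.ofFn u).get j) ((List.ofFn u).get k) else 1) =
      ∏ j, ∏ k ∈ Ioi j, f (u j) (u k) := by
  rw [← prod_ite_lt_eq_prod_Ioi]
  refine Fintype.prod_equiv (finCongr (List.length_ofFn)) _ _ fun j => ?_
  refine Fintype.prod_equiv (finCongr (List.length_ofFn)) _ _ fun k => ?_
  simp [Fin.cast]

lemma Kd_ofFn (c : ℂ) {m : ℕ} (u v : Fin m → ℂ) :
    Kd c (List.ofFn u) (List.ofFn v) = dwpf c u v := by
  unfold Kd dwpf dwMatrix
  have hv : (∏ j : Fin (List.ofFn v).length, ∏ k : Fin (List.ofFn v).length,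
      if (k : ℕ) < j then gG c ((List.ofFn v).get j) ((List.ofFn v).get k) else 1) =
      ∏ j, ∏ k ∈ Ioi j, gG c (v k) (v j) := by
    rw [prod_comm]
    exact prod_ite_lt_ofFn (fun x y => gG c y x) v
  rw [prod_ite_lt_ofFn, hv]
  congr 1
  rw [← det_submatrix_equiv_self (finCongr (List.length_ofFn (f := u))).symm]
  congr 1
  ext j k
  simp only [submatrix_apply, of_apply]
  congr 1
  · simp
  · refine Fintype.prod_equiv (finCongr List.length_ofFn) _ _ fun k' => ?_
    have hk' : (k' : ℕ) < m := by simpa using k'.isLt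
    simp [Fin.ext_iff, hk', Fin.cast]

lemma Kd_perm (c : ℂ) {U U' V V' : List ℂ} (h : U.length = V.length) (hU : U.Nodup)
    (hV : V.Nodup) (pU : U.Perm U') (pV : V.Perm V') : Kd c U V = Kd c U' V' := by
  obtain ⟨m, u, v, rfl, rfl⟩ := List.exists_eq_ofFn_of_length_eq h
  obtain ⟨m', u', v', rfl, rfl⟩ := List.exists_eq_ofFn_of_length_eq
    (pU.length_eq.symm.trans (h.trans pV.length_eq))
  have hrange : ∀ {w : Fin m → ℂ} {w' : Fin m' → ℂ}, (List.ofFn w).Perm (List.ofFn w') →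
      Set.range w = Set.range w' := fun p => Set.ext fun a => by
    simpa [List.mem_ofFn'] using p.mem_iff
  obtain ⟨e, rfl⟩ := exists_equiv_comp_eq_of_range_eq (List.nodup_ofFn.mp hU)
    (List.nodup_ofFn.mp (pU.nodup_iff.mp hU)) (hrange pU)
  obtain ⟨e', rfl⟩ := exists_equiv_comp_eq_of_range_eq (List.nodup_ofFn.mp hV)
    (List.nodup_ofFn.mp (pV.nodup_iff.mp hV)) (hrange pV)
  rw [Kd_ofFn, Kd_ofFn, dwpf_comp_equiv]

lemma Kd_map_add_map_add (c t : ℂ) {U V : List ℂ} (h : U.length = V.length) :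
    Kd c (U.map (· + t)) (V.map (· + t)) = Kd c U V := by
  obtain ⟨m, u, v, rfl, rfl⟩ := List.exists_eq_ofFn_of_length_eq h
  simp only [List.map_ofFn, Kd_ofFn]
  exact dwpf_add_const c t u v

lemma Kd_cons {c : ℂ} (hc : c ≠ 0) {x : ℂ} {U W : List ℂ} (h : U.length = W.length)
    (hU : x ∉ U) (hW : x + c ∉ W) : Kd c (x :: U) ((x + c) :: W) = - Kd c U W := by
  obtain ⟨m, u, v, rfl, rfl⟩ := List.exists_eq_ofFn_of_length_eq h
  rw [← List.ofFn_cons, ← List.ofFn_cons, Kd_ofFn, Kd_ofFn]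
  simp only [List.mem_ofFn', Set.mem_range, not_exists] at hU hW
  exact dwpf_cons hc x u v hU hW

lemma Kd_append_map_add {c : ℂ} (hc : c ≠ 0) (P : List ℂ) {U W : List ℂ}
    (h : U.length = W.length) (hPU : (P ++ U).Nodup) (hPW : (P.map (· + c) ++ W).Nodup) :
    Kd c (P ++ U) (P.map (· + c) ++ W) = (-1) ^ P.length * Kd c U W := by
  induction P with
  | nil => simp
  | cons x P ih =>
    simp only [List.cons_append, List.map_cons, List.nodup_cons] at hPU hPW ⊢
    rw [Kd_cons hc (by simp [h]) hPU.1 hPW.1, ih hPU.2 hPW.2, List.length_cons, pow_succ]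
    ring

lemma Kd_map_sub_append {c : ℂ} (hc : c ≠ 0) (Q : List ℂ) {U W : List ℂ}
    (h : U.length = W.length) (hQU : (Q.map (· - c) ++ U).Nodup) (hQW : (Q ++ W).Nodup) :
    Kd c (Q.map (· - c) ++ U) (Q ++ W) = (-1) ^ Q.length * Kd c U W := by
  simpa [Function.comp_def] using Kd_append_map_add hc (Q.map (· - c)) h hQU
    (by simpa [Function.comp_def] using hQW)

lemma Kd_append_eq {c : ℂ} (hc : c ≠ 0) {P Q A B : List ℂ} (hAB : A.length = B.length)
    (hPA : (P ++ A).Nodup) (hPB : (P ++ B).Nodup) (hQA : (Q ++ A).Nodup) (hQB : (Q ++ B).Nodup) :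
    Kd c (P ++ A) ((P ++ B).map (· + c)) =
      (-1) ^ (P.length + Q.length) * Kd c ((Q ++ A).map (· - c)) (Q ++ B) := by
  have hshift : Kd c A (B.map (· + c)) = Kd c (A.map (· - c)) B := by
    simpa [Function.comp_def] using Kd_map_add_map_add c c (U := A.map (· - c)) (V := B) (by simpa)
  have hPB' : (P.map (· + c) ++ B.map (· + c)).Nodup := by
    simpa using hPB.map (add_left_injective c)
  have hQA' : (Q.map (· - c) ++ A.map (· - c)).Nodup := by
    simpa using hQA.map (sub_left_injective (b := c))
  rw [List.map_append, Kd_append_map_add hc P (by simpa) hPA hPB', hshift, List.map_append,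
    Kd_map_sub_append hc Q (by simpa) hQA' hQB, pow_add, mul_assoc, ← mul_assoc ((-1) ^ Q.length),
    ← mul_pow, neg_one_mul, neg_neg, one_pow, one_mul]

lemma Kd_map_add_eq_of_perm {c : ℂ} (hc : c ≠ 0) {L M L' M' P Q A B : List ℂ}
    (hlen : L.length = M.length) (hL : L.Nodup) (hM : M.Nodup) (hL' : L'.Nodup) (hM' : M'.Nodup)
    (pL : L.Perm (P ++ A)) (pM : M.Perm (P ++ B)) (pL' : L'.Perm (Q ++ A))
    (pM' : M'.Perm (Q ++ B)) :
    Kd c L (M.map (· + c)) = (-1) ^ (L.length + M'.length) * Kd c (L'.map (· - c)) M' := by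
  have hAB : A.length = B.length := by
    simpa [pL.length_eq, pM.length_eq] using hlen
  have hsign : L.length + M'.length = P.length + Q.length + 2 * A.length := by
    simp only [pL.length_eq, pM'.length_eq, List.length_append, hAB]
    omega
  rw [Kd_perm c (hlen.trans (M.length_map _).symm) hL (hM.map (add_left_injective c)) pL
      (pM.map _),
    Kd_perm c (by simp [pL'.length_eq, pM'.length_eq, hAB]) (hL'.map (sub_left_injective (b := c)))
      hM' (pL'.map _) pM',
    Kd_append_eq hc hAB (pL.nodup_iff.mp hL) (pM.nodup_iff.mp hM) (pL'.nodup_iff.mp hL')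
      (pM'.nodup_iff.mp hM'), hsign, pow_add _ _ (2 * _), pow_mul, neg_one_sq, one_pow, mul_one]

lemma subL_length (V : List ℂ) (S : Finset (Fin V.length)) : (subL V S).length = S.card := by
  simp [subL]

lemma subL_nodup {V : List ℂ} (hV : V.Nodup) (S : Finset (Fin V.length)) : (subL V S).Nodup :=
  (sort_nodup _ _).map (List.nodup_iff_injective_get.mp hV)

lemma subL_perm_inter_append_sdiff (V : List ℂ) (S T : Finset (Fin V.length)) :
    (subL V S).Perm (subL V (S ∩ T) ++ subL V (S \ T)) := by
  rw [← Multiset.coe_eq_coe, ← Multiset.coe_add]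
  simp only [subL, ← Multiset.map_coe, sort_eq, ← Multiset.map_add]
  rw [← disjUnion_val, disjUnion_eq_union, union_comm, sdiff_union_inter]
  exact (disjoint_sdiff_inter S T).symm

theorem stmt7_general (c : ℂ) (hc : c ≠ 0) (b n : ℕ) (V : List ℂ) (hV : V.length = b)
    (Aα Aβ : Finset (Fin V.length)) (hα : Aα.card = n) (hβ : Aβ.card = n)
    (hgen : Generic c V) :
    Kd c (subL V Aα) ((subL V Aβ).map (· + c))
      = (-1 : ℂ) ^ b * Kd c ((subL V Aβᶜ).map (· - c)) (subL V Aαᶜ) := by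
  have hnd := subL_nodup (hgen.imp And.left)
  have pβ := subL_perm_inter_append_sdiff V Aβ Aα
  have pβc := subL_perm_inter_append_sdiff V Aβᶜ Aαᶜ
  have pαc := subL_perm_inter_append_sdiff V Aαᶜ Aβᶜ
  rw [inter_comm] at pβ
  rw [inter_comm, compl_sdiff_compl] at pβc
  rw [compl_sdiff_compl] at pαc
  have hb : (subL V Aα).length + (subL V Aαᶜ).length = b := by
    rw [subL_length, subL_length, card_add_card_compl, Fintype.card_fin, hV]
  rw [Kd_map_add_eq_of_perm hc (by rw [subL_length, subL_length, hα, hβ]) (hnd _) (hnd _) (hnd _)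
    (hnd _) (subL_perm_inter_append_sdiff V Aα Aβ) pβ pβc pαc, hb]

/-- eq. (5.4): for two partitions `{v̄_α,v̄_ᾱ}` and `{v̄_β,v̄_β̄}` of `v̄`
with `|v̄_α| = |v̄_β| = n`, one has `K(v̄_α|v̄_β+c) = (−1)^b·K(v̄_β̄−c|v̄_ᾱ)`. -/
theorem stmt7 (c : ℂ) (hc : c ≠ 0) (b n : ℕ) (hn : n ≤ b) (V : List ℂ) (hV : V.length = b)
    (Aα Aβ : Finset (Fin V.length)) (hα : Aα.card = n) (hβ : Aβ.card = n)
    (hgen : Generic c V) :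
    Kd c (subL V Aα) ((subL V Aβ).map (· + c))
      = (-1 : ℂ) ^ b * Kd c ((subL V Aβᶜ).map (· - c)) (subL V Aαᶜ) :=
  stmt7_general c hc b n V hV Aα Aβ hα hβ hgen
end

section
/- Let v̄_γ be a tuple of p ≥ 1 pairwise distinct complex numbers and let w, ξ be two further complex numbers, all generic so that every denominator below is nonzero. Then the sum over all partitions of v̄_γ into a single element v̄_ρ and the complementary subset v̄_σ satisfies: Σ f(v̄_ρ, v̄_σ)·g(w, v̄_ρ)·g(ξ, v̄_ρ) = g(ξ, w)·( f(w, v̄_γ) − f(ξ, v̄_γ) ). -/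
/-!
Since `g(w,u)·g(ξ,u) = g(ξ,w)·(g(w,u) − g(ξ,u))`, the sum splits into `g(ξ,w)·(S(w) − S(ξ))` with
`S(z) = Σ_k f(v_k, v̄ ∖ v_k)·g(z, v_k)`, and `S(z) = f(z, v̄) − 1` is the partial fraction
expansion of `f(z, v̄)` in `z`. The latter follows by induction on `v̄`: adjoining `v_a` multiplies
each old term by `f(v_k, v_a) = 1 + g(v_k, v_a)`, and the same partial fraction identity rewrites
`g(v_k, v_a)·g(z, v_k)` through the old sums at `z` and at `v_a`.
-/

open scoped BigOperators

section

variable {c : ℂ}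

lemma gG_swap (x y : ℂ) : gG c x y = -gG c y x := by
  simp only [gG, ← div_neg, neg_sub]

lemma fF_eq_one_add_gG {x y : ℂ} (h : x ≠ y) : fF c x y = 1 + gG c x y := by
  rw [fF, gG, add_div, div_self (sub_ne_zero.mpr h)]

lemma gG_mul_gG {x y u : ℂ} (hx : x ≠ u) (hy : y ≠ u) (hxy : x ≠ y) :
    gG c x u * gG c y u = gG c y x * (gG c x u - gG c y u) := by
  have := sub_ne_zero.mpr hx
  have := sub_ne_zero.mpr hy
  have := sub_ne_zero.mpr hxy.symm
  unfold gG
  field_simp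
  ring

theorem sum_prod_erase_fF_mul_gG {ι : Type*} [DecidableEq ι] {s : Finset ι} {v : ι → ℂ}
    (hv : Set.InjOn v s) {z : ℂ} (hz : ∀ i ∈ s, v i ≠ z) :
    ∑ k ∈ s, (∏ j ∈ s.erase k, fF c (v k) (v j)) * gG c z (v k)
      = (∏ j ∈ s, fF c z (v j)) - 1 := by
  induction s using Finset.induction_on generalizing z with
  | empty => simp
  | @insert a s ha ih =>
    have hvs : Set.InjOn v s := hv.mono (Finset.subset_insert a s)
    have hva : ∀ k ∈ s, v k ≠ v a := fun k hk h =>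
      ha (hv (Finset.mem_insert_of_mem hk) (Finset.mem_insert_self a s) h ▸ hk)
    have hza : v a ≠ z := hz a (Finset.mem_insert_self a s)
    have hzs : ∀ k ∈ s, v k ≠ z := fun k hk => hz k (Finset.mem_insert_of_mem hk)
    have hstep : ∀ k ∈ s, (∏ j ∈ (insert a s).erase k, fF c (v k) (v j)) * gG c z (v k)
        = (∏ j ∈ s.erase k, fF c (v k) (v j)) * gG c z (v k) + gG c z (v a) *
          ((∏ j ∈ s.erase k, fF c (v k) (v j)) * gG c z (v k)
            - (∏ j ∈ s.erase k, fF c (v k) (v j)) * gG c (v a) (v k)) := by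
      intro k hk
      have hak : a ≠ k := fun h => ha (h ▸ hk)
      rw [Finset.erase_insert_of_ne hak,
        Finset.prod_insert (fun h => ha (Finset.mem_of_mem_erase h)),
        fF_eq_one_add_gG (hva k hk), gG_swap (v k)]
      linear_combination (-∏ j ∈ s.erase k, fF c (v k) (v j)) *
        gG_mul_gG (c := c) (hva k hk).symm (hzs k hk).symm hza
    rw [Finset.sum_insert ha, Finset.prod_insert ha, Finset.erase_insert ha,
      Finset.sum_congr rfl hstep, Finset.sum_add_distrib, ← Finset.mul_sum, Finset.sum_sub_distrib,
      ih hvs hzs, ih hvs (fun k hk => hva k hk), fF_eq_one_add_gG hza.symm]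
    ring

end

lemma pF_singleton (F : ℂ → ℂ → ℂ) (x : ℂ) (L : List ℂ) :
    pF F [x] L = ∏ j : Fin L.length, F x (L.get j) := by
  simp [pF, Fin.prod_univ_fun_getElem]

lemma pF_singleton_subL (F : ℂ → ℂ → ℂ) (x : ℂ) (L : List ℂ) (A : Finset (Fin L.length)) :
    pF F [x] (subL L A) = ∏ j ∈ A, F x (L.get j) := by
  rw [pF, subL, List.map_singleton, List.prod_singleton, List.map_map,
    ((Finset.sort_perm_toList A (· ≤ ·)).map _).prod_eq]
  exact Finset.prod_map_toList A _

theorem stmt8_general (c : ℂ) (Vγ : List ℂ)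
    (w ξ : ℂ) (hgen : (Vγ ++ [w, ξ]).Pairwise (· ≠ ·)) :
    ∑ k : Fin Vγ.length,
      pF (fF c) [Vγ.get k] (subL Vγ (Finset.univ.erase k)) * gG c w (Vγ.get k) *
        gG c ξ (Vγ.get k)
      = gG c ξ w * (pF (fF c) [w] Vγ - pF (fF c) [ξ] Vγ) := by
  obtain ⟨hV, hwξ_nodup, hdisj⟩ := List.nodup_append.mp hgen
  have hinj : Set.InjOn Vγ.get (Finset.univ : Finset (Fin Vγ.length)) :=
    (List.nodup_iff_injective_get.mp hV).injOn
  have hw (k : Fin Vγ.length) : Vγ.get k ≠ w := hdisj _ (List.get_mem _ _) _ (by simp)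
  have hξ (k : Fin Vγ.length) : Vγ.get k ≠ ξ := hdisj _ (List.get_mem _ _) _ (by simp)
  have hwξ : w ≠ ξ := by simpa using hwξ_nodup
  have hterm (k : Fin Vγ.length) (P : ℂ) :
      P * gG c w (Vγ.get k) * gG c ξ (Vγ.get k)
        = gG c ξ w * (P * gG c w (Vγ.get k) - P * gG c ξ (Vγ.get k)) := by
    rw [mul_assoc, gG_mul_gG (hw k).symm (hξ k).symm hwξ]
    ring
  simp only [pF_singleton_subL, hterm]
  rw [← Finset.mul_sum, Finset.sum_sub_distrib, sum_prod_erase_fF_mul_gG hinj (fun k _ => hw k),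
    sum_prod_erase_fF_mul_gG hinj (fun k _ => hξ k), pF_singleton, pF_singleton]
  ring

/-- eq. (6.32), contour-integral summation:
`Σ f(v̄_ρ,v̄_σ)·g(w,v̄_ρ)·g(ξ,v̄_ρ) = g(ξ,w)·(f(w,v̄_γ) − f(ξ,v̄_γ))`,
the sum running over all partitions of `v̄_γ` into a single element `v̄_ρ` and the
complementary subset `v̄_σ`. -/
theorem stmt8 (c : ℂ) (hc : c ≠ 0) (p : ℕ) (hp : 1 ≤ p) (Vγ : List ℂ) (hVγ : Vγ.length = p)
    (w ξ : ℂ) (hgen : (Vγ ++ [w, ξ]).Pairwise (· ≠ ·)) :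
    ∑ k : Fin Vγ.length,
      pF (fF c) [Vγ.get k] (subL Vγ (Finset.univ.erase k)) * gG c w (Vγ.get k) *
        gG c ξ (Vγ.get k)
      = gG c ξ w * (pF (fF c) [w] Vγ - pF (fF c) [ξ] Vγ) :=
  stmt8_general c Vγ w ξ hgen
end
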